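/- arXiv:1907.12212 — 3 statements merged into one kernel-verified Lean document; each statement's English description precedes it below -/
import Mathlib

section
/- Let $u \in [0,1]$ and define $T : \mathbb{R}^2 \to \mathbb{R}^2$ by $T_1(d_1,d_2) = \frac{u d_1}{2}(3 - (u d_1)^2 - 3 d_2^2)$ and $T_2(d_1,d_2) = \frac{d_2}{2}(3 - 3(u d_1)^2 - d_2^2)$. Then for every $(d_1,d_2)$ in the set $S = \{(d_1,d_2) \in [0,1]^2 : d_1 + d_2 \le 1\}$, the image $T(d_1,d_2)$ also lies in $S$. -/
theorem stmt_0 (u : ℝ) (hu : u ∈ Set.Icc (0:ℝ) 1)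
    (d1 d2 : ℝ) (hd1 : d1 ∈ Set.Icc (0:ℝ) 1) (hd2 : d2 ∈ Set.Icc (0:ℝ) 1)
    (hsum : d1 + d2 ≤ 1) :
    (u * d1 / 2 * (3 - (u * d1) ^ 2 - 3 * d2 ^ 2)) ∈ Set.Icc (0:ℝ) 1 ∧
    (d2 / 2 * (3 - 3 * (u * d1) ^ 2 - d2 ^ 2)) ∈ Set.Icc (0:ℝ) 1 ∧
    (u * d1 / 2 * (3 - (u * d1) ^ 2 - 3 * d2 ^ 2)) +
      (d2 / 2 * (3 - 3 * (u * d1) ^ 2 - d2 ^ 2)) ≤ 1 := by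
  obtain ⟨hu0, hu1⟩ := hu
  obtain ⟨hd10, hd11⟩ := hd1
  obtain ⟨hd20, hd21⟩ := hd2
  have ha0 : 0 ≤ u * d1 := mul_nonneg hu0 hd10
  have had : u * d1 ≤ d1 := by nlinarith
  have hab : u * d1 + d2 ≤ 1 := by linarith
  have key : (u * d1 / 2 * (3 - (u * d1) ^ 2 - 3 * d2 ^ 2)) +
      (d2 / 2 * (3 - 3 * (u * d1) ^ 2 - d2 ^ 2)) ≤ 1 := by
    nlinarith [mul_nonneg (sq_nonneg (u * d1 + d2 - 1)) (by linarith : (0:ℝ) ≤ u * d1 + d2 + 2)]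
  have hf0 : 0 ≤ u * d1 / 2 * (3 - (u * d1) ^ 2 - 3 * d2 ^ 2) := by
    apply mul_nonneg (by linarith)
    nlinarith
  have hg0 : 0 ≤ d2 / 2 * (3 - 3 * (u * d1) ^ 2 - d2 ^ 2) := by
    apply mul_nonneg (by linarith)
    nlinarith
  exact ⟨⟨hf0, by linarith⟩, ⟨hg0, by linarith⟩, key⟩
end

section
/- Let $u \in [0,1]$ and $T$ be the map with $T_1(d_1,d_2) = \frac{u d_1}{2}(3 - (u d_1)^2 - 3 d_2^2)$, $T_2(d_1,d_2) = \frac{d_2}{2}(3 - 3(u d_1)^2 - d_2^2)$. The set of fixed points of $T$ in $S = \{(d_1,d_2)\in[0,1]^2 : d_1+d_2 \le 1\}$ is exactly: $(0,0)$ and $(0,1)$ always; $(\sqrt{(3u-2)/u^3}, 0)$ if and only if additionally $u \ge 2/3$; and $(\sqrt{1/(4u^3)}, \sqrt{(4u-3)/(4u)})$ if and only if additionally $u \ge 3/4$. -/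
theorem stmt_2 (u : ℝ) (hu : u ∈ Set.Icc (0:ℝ) 1)
    (d1 d2 : ℝ) (hd1 : d1 ∈ Set.Icc (0:ℝ) 1) (hd2 : d2 ∈ Set.Icc (0:ℝ) 1)
    (hsum : d1 + d2 ≤ 1) :
    (u * d1 / 2 * (3 - (u * d1) ^ 2 - 3 * d2 ^ 2) = d1 ∧
     d2 / 2 * (3 - 3 * (u * d1) ^ 2 - d2 ^ 2) = d2) ↔
    ((d1, d2) = ((0:ℝ), (0:ℝ)) ∨
     (d1, d2) = ((0:ℝ), (1:ℝ)) ∨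
     (2 / 3 ≤ u ∧ (d1, d2) = (Real.sqrt ((3 * u - 2) / u ^ 3), (0:ℝ))) ∨
     (3 / 4 ≤ u ∧ (d1, d2) = (Real.sqrt (1 / (4 * u ^ 3)),
        Real.sqrt ((4 * u - 3) / (4 * u))))) := by
  obtain ⟨hu0, hu1⟩ := hu
  obtain ⟨hd10, hd11⟩ := hd1
  obtain ⟨hd20, hd21⟩ := hd2
  constructor
  · rintro ⟨h1, h2⟩
    have h1' : d1 * (u * (3 - (u * d1) ^ 2 - 3 * d2 ^ 2) - 2) = 0 := by
      linear_combination 2 * h1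
    have h2' : d2 * (1 - 3 * (u * d1) ^ 2 - d2 ^ 2) = 0 := by
      linear_combination 2 * h2
    rcases eq_or_lt_of_le hd10 with h10 | h1pos
    · -- d1 = 0
      have hd1z : d1 = 0 := h10.symm
      subst hd1z
      rcases mul_eq_zero.mp h2' with h | h
      · exact Or.inl (by simp [h])
      · have h2sq : (d2 - 1) * (d2 + 1) = 0 := by linear_combination -h
        rcases mul_eq_zero.mp h2sq with h' | h'
        · have hd2e : d2 = 1 := by linarith
          exact Or.inr (Or.inl (by simp [hd2e]))
        · exfalso; linarith
    · have hd1ne : d1 ≠ 0 := ne_of_gt h1pos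
      have hA : u * (3 - (u * d1) ^ 2 - 3 * d2 ^ 2) - 2 = 0 :=
        (mul_eq_zero.mp h1').resolve_left hd1ne
      have hupos : 0 < u := by
        rcases lt_or_eq_of_le hu0 with h | h
        · exact h
        · exfalso; rw [← h] at hA; norm_num at hA
      have hune : u ≠ 0 := ne_of_gt hupos
      rcases eq_or_lt_of_le hd20 with h20 | h2pos
      · -- d2 = 0
        have hd2z : d2 = 0 := h20.symm
        subst hd2z
        have key : u ^ 3 * d1 ^ 2 = 3 * u - 2 := by linear_combination -hA
        have hu23 : 2 / 3 ≤ u := by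
          nlinarith [mul_pos (pow_pos hupos 3) (pow_pos h1pos 2)]
        have hsq : (3 * u - 2) / u ^ 3 = d1 ^ 2 := by
          rw [div_eq_iff (by positivity : (u:ℝ) ^ 3 ≠ 0)]
          linear_combination -key
        refine Or.inr (Or.inr (Or.inl ⟨hu23, ?_⟩))
        simp only [Prod.mk.injEq]
        exact ⟨by rw [hsq, Real.sqrt_sq hd10], trivial⟩
      · -- d2 > 0
        have hd2ne : d2 ≠ 0 := ne_of_gt h2pos
        have hB : 1 - 3 * (u * d1) ^ 2 - d2 ^ 2 = 0 :=
          (mul_eq_zero.mp h2').resolve_left hd2ne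
        have key1 : 4 * u ^ 3 * d1 ^ 2 = 1 := by
          linear_combination hA / 2 - 3 * u / 2 * hB
        have key2 : 4 * u * d2 ^ 2 = 4 * u - 3 := by
          linear_combination (-(4 * u)) * hB - 3 * key1
        have hu34 : 3 / 4 ≤ u := by
          nlinarith [mul_pos hupos (pow_pos h2pos 2)]
        have hsq1 : 1 / (4 * u ^ 3) = d1 ^ 2 := by
          rw [div_eq_iff (by positivity : (4 * u ^ 3 : ℝ) ≠ 0)]
          linear_combination -key1
        have hsq2 : (4 * u - 3) / (4 * u) = d2 ^ 2 := by
          rw [div_eq_iff (by positivity : (4 * u : ℝ) ≠ 0)]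
          linear_combination -key2
        refine Or.inr (Or.inr (Or.inr ⟨hu34, ?_⟩))
        simp only [Prod.mk.injEq]
        exact ⟨by rw [hsq1, Real.sqrt_sq hd10], by rw [hsq2, Real.sqrt_sq hd20]⟩
  · rintro (h | h | ⟨hu23, h⟩ | ⟨hu34, h⟩)
    · obtain ⟨e1, e2⟩ := Prod.mk.injEq .. |>.mp h
      subst e1; subst e2
      norm_num
    · obtain ⟨e1, e2⟩ := Prod.mk.injEq .. |>.mp h
      subst e1; subst e2
      norm_num
    · obtain ⟨e1, e2⟩ := Prod.mk.injEq .. |>.mp h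
      subst e2
      have hupos : 0 < u := by linarith
      have hune : u ≠ 0 := ne_of_gt hupos
      have hd1sq : d1 ^ 2 = (3 * u - 2) / u ^ 3 := by
        rw [e1]; exact Real.sq_sqrt (div_nonneg (by linarith) (by positivity))
      have key : u ^ 3 * d1 ^ 2 = 3 * u - 2 := by
        rw [hd1sq]; field_simp
      constructor
      · linear_combination (-(d1) / 2) * key
      · norm_num
    · obtain ⟨e1, e2⟩ := Prod.mk.injEq .. |>.mp h
      have hupos : 0 < u := by linarith
      have hune : u ≠ 0 := ne_of_gt hupos
      have hd1sq : d1 ^ 2 = 1 / (4 * u ^ 3) := by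
        rw [e1]; exact Real.sq_sqrt (by positivity)
      have hd2sq : d2 ^ 2 = (4 * u - 3) / (4 * u) := by
        rw [e2]; exact Real.sq_sqrt (div_nonneg (by linarith) (by linarith))
      have key1 : 4 * u ^ 3 * d1 ^ 2 = 1 := by
        rw [hd1sq]; field_simp
      have key2 : 4 * u * d2 ^ 2 = 4 * u - 3 := by
        rw [hd2sq]; field_simp
      constructor
      · linear_combination (-(d1) / 8) * key1 - (3 * d1 / 8) * key2
      · have aux : 4 * u * (d2 / 2 * (3 - 3 * (u * d1) ^ 2 - d2 ^ 2)) =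
            4 * u * d2 := by
          linear_combination (-(3 * d2) / 2) * key1 - (d2 / 2) * key2
        exact mul_left_cancel₀ (by positivity : (4 * u : ℝ) ≠ 0) aux
end

section
/- Let $0 < u < 1$ and define $f(d_1,d_2) = \frac{1}{4}\big((2u+1-3u^2d_1^2-(2u+1)d_2^2)(3-u(2+u)d_1^2-3d_2^2)-4u(u+2)(2u+1)d_1^2d_2^2\big)$. Then for all $(d_1,d_2)$ with $d_1 \ge 0$, $d_2 \ge 0$, $d_1+d_2 \le 1$, and $(d_1,d_2) \neq (0,1)$, we have $f(d_1,d_2) > 0$. -/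
theorem stmt_5 (u : ℝ) (hu : 0 < u) (hu1 : u < 1)
    (d1 d2 : ℝ) (h1 : 0 ≤ d1) (h2 : 0 ≤ d2) (hsum : d1 + d2 ≤ 1)
    (hne : (d1, d2) ≠ ((0:ℝ), (1:ℝ))) :
    0 < (1 / 4 : ℝ) *
      ((2 * u + 1 - 3 * u ^ 2 * d1 ^ 2 - (2 * u + 1) * d2 ^ 2) *
        (3 - u * (2 + u) * d1 ^ 2 - 3 * d2 ^ 2) -
       4 * u * (u + 2) * (2 * u + 1) * d1 ^ 2 * d2 ^ 2) := by
  rcases eq_or_lt_of_le h1 with h1e | h1p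
  · have hd2 : d2 < 1 := by
      rcases lt_or_eq_of_le (by linarith : d2 ≤ 1) with h | h
      · exact h
      · exact absurd (by rw [← h1e, h]) hne
    rw [← h1e]
    have : 0 < 1 - d2^2 := by nlinarith
    nlinarith [sq_nonneg (1 - d2^2)]
  · -- d1 > 0 case
    have hb : d2 ≤ 1 - d1 := by linarith
    have e1 : 0 ≤ (1-d1)^2 - d2^2 := by nlinarith
    have hd2le : d2^2 ≤ 1 := by nlinarith
    have hd1le : (1-d1)^2 ≤ 1 := by nlinarith
    have e2 : 0 ≤ 3*(2*u+1)*(2 - d2^2 - (1-d1)^2) + 6*u*(u^2+u+1)*d1^2 := by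
      have := mul_nonneg (by linarith : (0:ℝ) ≤ 3*(2*u+1)) (by linarith : (0:ℝ) ≤ 2 - d2^2 - (1-d1)^2)
      nlinarith [mul_nonneg (by positivity : (0:ℝ) ≤ 6*u*(u^2+u+1)) (sq_nonneg d1)]
    -- h(d1) ≥ h(1) > 0
    have hC : 0 ≤ (1-d1) * (12*(1+u)^2*(1-u) - 3*(1-u^2)^2*(d1+1)) := by
      apply mul_nonneg (by linarith)
      nlinarith [sq_nonneg (1+u), mul_pos (mul_pos hu hu) hu, sq_nonneg (1-u)]
    have hend : 0 < (1-u)^2*(3*u+1)*(u+3) := by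
      have h1u : (0:ℝ) < 1 - u := by linarith
      exact mul_pos (mul_pos (pow_pos h1u 2) (by linarith)) (by linarith)
    have hpos : 0 < d1^2 * (3*(1-u^2)^2*d1^2 + 12*(u+1)^2*(u-1)*d1
        + (12*(2*u+1)-4*u*(2+u)*(2*u+1))) := by
      apply mul_pos (by positivity)
      nlinarith [hC, hend]
    nlinarith [mul_nonneg e1 e2, hpos]
end
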